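/- Let z_1 = o, z_2, z_3, ... be a nearest-neighbor path in ℤ^n of ω-open sites starting at the origin, where ω is an (n,k)-hyperplane percolation configuration. Fix I ∈ 𝓘(k;n), suppose 𝒱_{ω_I}(o; ℤ^k_I) is finite, and suppose T ⊆ ℤ^{n-k}_{[n]∖I} surrounds the origin with decomposition ℤ^{n-k}_{[n]∖I} ∖ T = A ∪ B (A finite, connected, containing the origin, and dist(A,B) ≥ 2 in l^1), with every v ∈ T being 𝒫_I(x)-closed for every x ∈ 𝒱_{ω_I}(o; ℤ^k_I). Then for every i ≥ 1, π_I(z_i) ∈ 𝒱_{ω_I}(o; ℤ^k_I) and π_{[n]∖I}(z_i) ∈ A. -/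
import Mathlib


namespace BernoulliHyperplane

variable {n : ℕ}

/-- Nearest-neighbor adjacency in `ℤⁿ` (`l¹`-distance one). -/
def latAdj (v w : Fin n → ℤ) : Prop := (∑ i, |v i - w i|) = 1

/-- Coordinate projection onto the sublattice spanned by the coordinates in `J`. -/
def proj (J : Finset (Fin n)) (v : Fin n → ℤ) : Fin n → ℤ := fun i => if i ∈ J then v i else 0

/-- The sublattice `ℤ^J` of points supported on the coordinates in `J`. -/
def sub (J : Finset (Fin n)) : Set (Fin n → ℤ) := {v | ∀ i ∉ J, v i = 0}

/-- The open cluster of `x` inside the set of sites `S`, for the openness predicate `good`: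
all sites reachable from `x` by nearest-neighbor paths of `good` sites staying in `S`. -/
def clusterIn (S : Set (Fin n → ℤ)) (good : (Fin n → ℤ) → Prop) (x : Fin n → ℤ) :
    Set (Fin n → ℤ) :=
  {v | (x ∈ S ∧ good x) ∧ Relation.ReflTransGen (fun u w => latAdj u w ∧ w ∈ S ∧ good w) x v}

/-- A site of `ℤⁿ` is open in `(n,k)`-hyperplane percolation iff all its projections onto the
`k`-dimensional coordinate sublattices are open. -/
def hpOpen (k : ℕ) (f : Finset (Fin n) → (Fin n → ℤ) → Bool) (v : Fin n → ℤ) : Prop :=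
  ∀ J : Finset (Fin n), J.card = k → f J (proj J v) = true

/-- `T` surrounds the origin in the lattice `S`, witnessed by the decomposition
`S ∖ T = A ∪ B`: `A` is finite, connected, contains the origin, and is at `l¹`-distance
at least `2` from `B`. -/
def SurroundsWith (S T A B : Set (Fin n → ℤ)) : Prop :=
  T ⊆ S ∧ A ∪ B = S \ T ∧ Disjoint A B ∧ (0 : Fin n → ℤ) ∈ A ∧ A.Finite ∧
    (∀ a ∈ A, Relation.ReflTransGen (fun u w : Fin n → ℤ => latAdj u w ∧ u ∈ A ∧ w ∈ A) 0 a) ∧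
    ∀ a ∈ A, ∀ b ∈ B, 2 ≤ ∑ i, |a i - b i|

/-- `T` surrounds the origin in the lattice `S`. -/
def Surrounds (S T : Set (Fin n → ℤ)) : Prop := ∃ A B, SurroundsWith S T A B

lemma proj_idem (J : Finset (Fin n)) (v : Fin n → ℤ) : proj J (proj J v) = proj J v := by
  funext l; simp only [proj]; split <;> simp_all

lemma proj_mem_sub (J : Finset (Fin n)) (v : Fin n → ℤ) : proj J v ∈ sub J := by
  intro l hl; simp [proj, hl]

lemma proj_add_proj_compl (I : Finset (Fin n)) (v : Fin n → ℤ) :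
    proj I v + proj Iᶜ v = v := by
  funext l
  by_cases hl : l ∈ I <;> simp [proj, hl]

/-- A nearest-neighbor step changes exactly one coordinate, by `±1`. -/
lemma latAdj_single {v w : Fin n → ℤ} (h : latAdj v w) :
    ∃ j, |v j - w j| = 1 ∧ ∀ l, l ≠ j → v l = w l := by
  unfold latAdj at h
  have hne : (∑ i, |v i - w i|) ≠ 0 := by rw [h]; norm_num
  obtain ⟨j, -, hj⟩ := Finset.exists_ne_zero_of_sum_ne_zero hne
  have hsplit : |v j - w j| + ∑ l ∈ Finset.univ.erase j, |v l - w l| = 1 := by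
    rw [Finset.add_sum_erase Finset.univ (fun l => |v l - w l|) (Finset.mem_univ j)]
    exact h
  have hnonneg : ∀ l ∈ Finset.univ.erase j, 0 ≤ |v l - w l| := fun l _ => abs_nonneg _
  have hrest : (0:ℤ) ≤ ∑ l ∈ Finset.univ.erase j, |v l - w l| :=
    Finset.sum_nonneg hnonneg
  have hj1 : (1:ℤ) ≤ |v j - w j| := by
    rcases (abs_nonneg (v j - w j)).lt_or_eq with h' | h'
    · omega
    · exact absurd h'.symm hj
  have habs : |v j - w j| = 1 := by omega
  have hz : ∑ l ∈ Finset.univ.erase j, |v l - w l| = 0 := by omega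
  refine ⟨j, habs, fun l hl => ?_⟩
  have := (Finset.sum_eq_zero_iff_of_nonneg hnonneg).1 hz l
    (Finset.mem_erase.2 ⟨hl, Finset.mem_univ l⟩)
  have : v l - w l = 0 := abs_eq_zero.1 this
  omega

lemma proj_eq_of_step (J : Finset (Fin n)) {v w : Fin n → ℤ} {j : Fin n} (hj : j ∉ J)
    (hsupp : ∀ l, l ≠ j → v l = w l) : proj J v = proj J w := by
  funext l
  by_cases hl : l ∈ J
  · have : l ≠ j := fun h => hj (h ▸ hl)
    simp [proj, hl, hsupp l this]
  · simp [proj, hl]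

lemma proj_adj (J : Finset (Fin n)) {v w : Fin n → ℤ} (h : latAdj v w) {j : Fin n}
    (hj : j ∈ J) (hsupp : ∀ l, l ≠ j → v l = w l) : latAdj (proj J v) (proj J w) := by
  unfold latAdj at *
  rw [← h]
  refine Finset.sum_congr rfl fun l _ => ?_
  by_cases hl : l ∈ J
  · simp [proj, hl]
  · have : l ≠ j := fun h => hl (h ▸ hj)
    simp [proj, hl, hsupp l this]

/-- For `x ∈ ℤᵏ_I` and `v ∈ ℤ^{n-k}_{[n]∖I}`, the site `v` is `𝒫_I(x)`-closed: the unique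
point `u = x + v` of `𝒫_I(x)` projecting to `v` satisfies `ω_J(π_J(u)) = 0` for some
`k`-subset `J ≠ I`. -/
def PClosed (k : ℕ) (f : Finset (Fin n) → (Fin n → ℤ) → Bool) (I : Finset (Fin n))
    (x v : Fin n → ℤ) : Prop :=
  ∃ J : Finset (Fin n), J.card = k ∧ J ≠ I ∧ f J (proj J (x + v)) = false

/-- along any nearest-neighbor path of `ω`-open sites starting at the origin,
under the hypotheses of the blocking lemma (with explicit decomposition `A ∪ B`), every site
projects into the finite `ω_I`-cluster of the origin in `ℤᵏ_I` and into the finite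
component `A` in `ℤ^{n-k}_{[n]∖I}`. -/
theorem open_path_confined (n k : ℕ) (hn : 3 ≤ n) (hk2 : 2 ≤ k) (hkn : k ≤ n - 1)
    (f : Finset (Fin n) → (Fin n → ℤ) → Bool) (I : Finset (Fin n)) (hI : I.card = k)
    (hfin : (clusterIn (sub I) (fun v => f I (proj I v) = true) 0).Finite)
    (T A B : Set (Fin n → ℤ)) (hsurr : SurroundsWith (sub Iᶜ) T A B)
    (hclosed : ∀ v ∈ T, ∀ x ∈ clusterIn (sub I) (fun v => f I (proj I v) = true) 0,
      PClosed k f I x v)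
    (z : ℕ → Fin n → ℤ) (hz0 : z 0 = 0)
    (hadj : ∀ i, latAdj (z i) (z (i + 1)))
    (hopen : ∀ i, hpOpen k f (z i)) :
    ∀ i, proj I (z i) ∈ clusterIn (sub I) (fun v => f I (proj I v) = true) 0 ∧
      proj Iᶜ (z i) ∈ A := by
  obtain ⟨hTS, hAB, hdisj, h0A, hAfin, hAconn, hdist⟩ := hsurr
  intro i
  induction i with
  | zero =>
    have h0 : proj I (z 0) = 0 := by
      rw [hz0]; funext l; simp [proj]
    have h0' : proj Iᶜ (z 0) = 0 := by
      rw [hz0]; funext l; simp [proj]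
    have hg : f I (proj I (0 : Fin n → ℤ)) = true := by
      have := hopen 0 I hI
      rwa [hz0] at this
    refine ⟨?_, h0' ▸ h0A⟩
    rw [h0]
    exact ⟨⟨fun l _ => rfl, hg⟩, Relation.ReflTransGen.refl⟩
  | succ i ih =>
    obtain ⟨hcl, hA⟩ := ih
    obtain ⟨j, habs, hsupp⟩ := latAdj_single (hadj i)
    by_cases hj : j ∈ I
    · -- step inside the hyperplane: the `Iᶜ`-projection is unchanged
      have hc : proj Iᶜ (z i) = proj Iᶜ (z (i+1)) :=
        proj_eq_of_step Iᶜ (by simpa using hj) hsupp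
      refine ⟨?_, hc ▸ hA⟩
      have hadjI : latAdj (proj I (z i)) (proj I (z (i+1))) := proj_adj I (hadj i) hj hsupp
      have hgood : f I (proj I (proj I (z (i+1)))) = true := by
        rw [proj_idem]; exact hopen (i+1) I hI
      exact ⟨hcl.1, hcl.2.tail ⟨hadjI, proj_mem_sub I _, hgood⟩⟩
    · -- step transverse to the hyperplane: the `I`-projection is unchanged
      have hc : proj I (z i) = proj I (z (i+1)) := proj_eq_of_step I hj hsupp
      refine ⟨hc ▸ hcl, ?_⟩
      set v := proj Iᶜ (z (i+1)) with hv
      set a := proj Iᶜ (z i) with ha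
      have hadjC : latAdj a v := proj_adj Iᶜ (hadj i) (Finset.mem_compl.2 hj) hsupp
      have hvS : v ∈ sub Iᶜ := proj_mem_sub Iᶜ _
      have hvT : v ∉ T := by
        intro hvT
        obtain ⟨J, hJcard, hJne, hJf⟩ :=
          hclosed v hvT (proj I (z (i+1))) (hc ▸ hcl)
        rw [proj_add_proj_compl] at hJf
        have := hopen (i+1) J hJcard
        rw [this] at hJf
        simp at hJf
      have hvAB : v ∈ A ∪ B := by
        rw [hAB]; exact ⟨hvS, hvT⟩
      rcases hvAB with hvA | hvB
      · exact hvA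
      · exfalso
        have := hdist a hA v hvB
        unfold latAdj at hadjC
        omega

end BernoulliHyperplane
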